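/- arXiv:1701.02576 — 2 statements merged into one kernel-verified Lean document; each statement's English description precedes it below -/
import Mathlib

section
/- For every real x ∈ ℝ and every compactly supported C^1 function g : ℝ → ℝ, one has |g(x)|³ ≤ 3 · min(∫_{-∞}^{x} g², ∫_{x}^{∞} g²) · sup |g'|. -/
/-!
Since `g` has compact support, `g(x)³` is the integral of `(g³)' = 3 g² g'` over `(-∞, x]` and
minus its integral over `(x, ∞)`. Bounding `|g'|` by its supremum in either integral gives
`|g(x)|³ ≤ 3 (∫ g²) sup |g'|` on each half-line, hence with the minimum.
-/

open MeasureTheory Set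

theorem abs_le_iSup_abs_of_hasCompactSupport {X : Type*} [TopologicalSpace X] {f : X → ℝ}
    (hf : Continuous f) (hs : HasCompactSupport f) (t : X) : |f t| ≤ ⨆ s, |f s| :=
  le_ciSup (by simpa only [Real.norm_eq_abs] using
    hf.norm.bddAbove_range_of_hasCompactSupport hs.norm) t

theorem abs_integral_mul_le_integral_mul {α : Type*} [MeasurableSpace α] {μ : Measure α}
    {u f : α → ℝ} {M : ℝ} (hu : Integrable u μ) (hu0 : ∀ t, 0 ≤ u t)
    (hf : ∀ t, |f t| ≤ M) :
    |∫ t, u t * f t ∂μ| ≤ (∫ t, u t ∂μ) * M := by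
  rw [← integral_mul_const M u, ← Real.norm_eq_abs]
  refine norm_integral_le_of_norm_le (hu.mul_const M) (Filter.Eventually.of_forall fun t => ?_)
  rw [Real.norm_eq_abs, abs_mul, abs_of_nonneg (hu0 t)]
  exact mul_le_mul_of_nonneg_left (hf t) (hu0 t)

theorem HasCompactSupport.fun_pow {X : Type*} [TopologicalSpace X] {f : X → ℝ}
    (hf : HasCompactSupport f) {n : ℕ} (hn : n ≠ 0) : HasCompactSupport fun t => f t ^ n :=
  hf.comp_left (g := fun y : ℝ => y ^ n) (zero_pow hn)

theorem deriv_fun_pow_three_eq {g : ℝ → ℝ} (hg : Differentiable ℝ g) :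
    deriv (fun t => g t ^ 3) = fun t => 3 * g t ^ 2 * deriv g t := by
  funext t
  rw [deriv_fun_pow (hg t)]
  norm_num

section CompactSupport

variable {g : ℝ → ℝ} (hg : ContDiff ℝ 1 g) (hsupp : HasCompactSupport g)
include hg hsupp

theorem integrable_sq_of_hasCompactSupport (μ : Measure ℝ) [IsFiniteMeasureOnCompacts μ] :
    Integrable (fun t => g t ^ 2) μ :=
  (hg.continuous.pow 2).integrable_of_hasCompactSupport (hsupp.fun_pow two_ne_zero)

theorem abs_deriv_le_iSup (t : ℝ) : |deriv g t| ≤ ⨆ s, |deriv g s| :=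
  abs_le_iSup_abs_of_hasCompactSupport (hg.continuous_deriv le_rfl) hsupp.deriv t

theorem integral_Iic_sq_mul_deriv (x : ℝ) :
    ∫ t in Iic x, 3 * g t ^ 2 * deriv g t = g x ^ 3 := by
  rw [← deriv_fun_pow_three_eq (hg.differentiable one_ne_zero)]
  exact (hsupp.fun_pow three_ne_zero).integral_Iic_deriv_eq (hg.pow 3) x

theorem integral_Ioi_sq_mul_deriv (x : ℝ) :
    ∫ t in Ioi x, 3 * g t ^ 2 * deriv g t = -g x ^ 3 := by
  rw [← deriv_fun_pow_three_eq (hg.differentiable one_ne_zero)]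
  exact (hsupp.fun_pow three_ne_zero).integral_Ioi_deriv_eq (hg.pow 3) x

theorem abs_integral_sq_mul_deriv_le (μ : Measure ℝ) [IsFiniteMeasureOnCompacts μ] :
    |∫ t, 3 * g t ^ 2 * deriv g t ∂μ| ≤ 3 * (∫ t, g t ^ 2 ∂μ) * ⨆ s, |deriv g s| := by
  rw [← integral_const_mul]
  exact abs_integral_mul_le_integral_mul
    ((integrable_sq_of_hasCompactSupport hg hsupp μ).const_mul 3) (fun t => by positivity)
    (abs_deriv_le_iSup hg hsupp)

theorem abs_pow_three_le_integral_Iic (x : ℝ) :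
    |g x| ^ 3 ≤ 3 * (∫ t in Iic x, g t ^ 2) * ⨆ t, |deriv g t| := by
  rw [← abs_pow, ← integral_Iic_sq_mul_deriv hg hsupp x]
  exact abs_integral_sq_mul_deriv_le hg hsupp _

theorem abs_pow_three_le_integral_Ici (x : ℝ) :
    |g x| ^ 3 ≤ 3 * (∫ t in Ici x, g t ^ 2) * ⨆ t, |deriv g t| := by
  rw [← abs_pow, ← abs_neg, ← integral_Ioi_sq_mul_deriv hg hsupp x,
    integral_Ici_eq_integral_Ioi]
  exact abs_integral_sq_mul_deriv_le hg hsupp _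

end CompactSupport

/-- For every `x ∈ ℝ` and every compactly supported `C^1` function `g : ℝ → ℝ`,
`|g(x)|³ ≤ 3 · min(∫_{-∞}^x g², ∫_x^∞ g²) · sup |g'|`. -/
theorem stmt1 (g : ℝ → ℝ) (hg : ContDiff ℝ 1 g) (hsupp : HasCompactSupport g) (x : ℝ) :
    |g x| ^ 3 ≤
      3 * min (∫ t in Set.Iic x, g t ^ 2) (∫ t in Set.Ici x, g t ^ 2) *
        ⨆ t : ℝ, |deriv g t| := by
  have hM : 0 ≤ ⨆ t, |deriv g t| := (abs_nonneg _).trans (abs_deriv_le_iSup hg hsupp 0)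
  rw [mul_min_of_nonneg _ _ (by norm_num : (0 : ℝ) ≤ 3), min_mul_of_nonneg _ _ hM]
  exact le_min (abs_pow_three_le_integral_Iic hg hsupp x)
    (abs_pow_three_le_integral_Ici hg hsupp x)
end

section
/- Let ω⋆ > 0 and a > 0, and set m₁ = −√(2ω⋆ + 2a). If m : [T₁, T) → ℝ is C^1, satisfies m(T₁) = m₁, m'(t) < 0, and m'(t) < ψ(t)·(−m(t)²/2 + ω⋆) whenever m(t) ≤ m₁, where ψ : [T₁,∞) → (0,∞) is continuous with ∫_{T₁}^∞ ψ(s) ds = ∞, then m(t) → −∞ at some finite time T⁺ < ∞. -/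
/-!
Since `m' < 0`, `m` stays below `m₁ = −√(2ω⋆ + 2a)`, so `m² ≥ 2(ω⋆ + a)` and the Riccati inequality
improves to `m' ≤ −c ψ m²` with `c = a / (2(ω⋆ + a)) > 0`. Then `v = −1/m > 0` satisfies `v' ≤ −c ψ`,
so `v(t) ≤ v(t₀) − c ∫_{t₀}^t ψ → −∞`, which is absurd.
-/

open Set Filter

theorem Convex.antitoneOn_of_hasDerivAt_nonpos {D : Set ℝ} (hD : Convex ℝ D) {f f' : ℝ → ℝ}
    (hf : ∀ x ∈ D, HasDerivAt f (f' x) x) (hf' : ∀ x ∈ D, f' x ≤ 0) : AntitoneOn f D :=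
  antitoneOn_of_hasDerivWithinAt_nonpos hD
    (fun x hx => (hf x hx).continuousAt.continuousWithinAt)
    (fun x hx => (hf x (interior_subset hx)).hasDerivWithinAt)
    (fun x hx => hf' x (interior_subset hx))

theorem hasDerivAt_integral_of_continuousOn_Ici {ψ : ℝ → ℝ} {a x : ℝ}
    (hψ : ContinuousOn ψ (Ici a)) (hx : a < x) :
    HasDerivAt (fun t => ∫ s in a..t, ψ s) (ψ x) x :=
  intervalIntegral.integral_hasDerivAt_right
    (hψ.mono (uIcc_of_le hx.le ▸ Icc_subset_Ici_self)).intervalIntegrable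
    ((hψ.mono Ioi_subset_Ici_self).stronglyMeasurableAtFilter isOpen_Ioi x hx)
    (hψ.continuousAt (Ici_mem_nhds hx))

theorem neg_sq_div_two_add_le_neg_mul_sq {ω a x : ℝ} (hω : 0 ≤ ω) (hωa : 0 < ω + a)
    (hx : 2 * ω + 2 * a ≤ x ^ 2) : -x ^ 2 / 2 + ω ≤ -(a / (2 * (ω + a))) * x ^ 2 := by
  have key : -(a / (2 * (ω + a))) * x ^ 2 - (-x ^ 2 / 2 + ω)
      = ω * (x ^ 2 - (2 * ω + 2 * a)) / (2 * (ω + a)) := by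
    field_simp
    ring
  have : 0 ≤ ω * (x ^ 2 - (2 * ω + 2 * a)) / (2 * (ω + a)) := by
    apply div_nonneg (mul_nonneg hω (by linarith)); linarith
  linarith

theorem false_of_hasDerivAt_le_neg_mul_sq {ψ m m' : ℝ → ℝ} {T c : ℝ} (hc : 0 < c)
    (hψ : ContinuousOn ψ (Ici T))
    (hψdiv : Tendsto (fun t => ∫ s in T..t, ψ s) atTop atTop)
    (hm : ∀ t ∈ Ici T, HasDerivAt m (m' t) t) (hneg : ∀ t ∈ Ici T, m t < 0)
    (hric : ∀ t ∈ Ici T, m' t ≤ -c * ψ t * m t ^ 2) : False := by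
  set w : ℝ → ℝ := fun t => -(m t)⁻¹ + c * ∫ s in T..t, ψ s
  have hw : AntitoneOn w (Ioi T) := by
    refine (convex_Ioi T).antitoneOn_of_hasDerivAt_nonpos
      (f' := fun t => m' t / m t ^ 2 + c * ψ t) (fun t ht => ?_) (fun t ht => ?_)
    · have ht' := Ioi_subset_Ici_self ht
      rw [show m' t / m t ^ 2 + c * ψ t = -(-m' t / m t ^ 2) + c * ψ t by ring]
      exact ((hm t ht').inv (hneg t ht').ne).neg.add
        ((hasDerivAt_integral_of_continuousOn_Ici hψ ht).const_mul c)
    · have ht' := Ioi_subset_Ici_self ht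
      have : m' t / m t ^ 2 ≤ -c * ψ t := by
        rw [div_le_iff₀ (sq_pos_of_neg (hneg t ht'))]; linarith [hric t ht']
      linarith
  obtain ⟨t, ht, hbig⟩ := ((eventually_ge_atTop (T + 1)).and
    ((hψdiv.const_mul_atTop hc).eventually_gt_atTop (w (T + 1)))).exists
  have hwt : w t ≤ w (T + 1) := hw (by simp) (by simp; linarith) ht
  have hv : 0 < -(m t)⁻¹ := neg_pos.2 (inv_lt_zero.2 (hneg t (by simp; linarith)))
  simp only [w] at hwt hbig
  linarith

/-- Blow-up for the strict Riccati differential inequality: if `m(T₁) = −√(2ω⋆+2a)`,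
`m' < 0`, and `m' < ψ·(−m²/2 + ω⋆)` whenever `m ≤ −√(2ω⋆+2a)`, with `ψ > 0`
continuous of divergent integral, then `m` cannot be globally defined on `[T₁,∞)`
(it blows up to `−∞` in finite time). -/
theorem stmt19 (ω a T₁ : ℝ) (hω : 0 < ω) (ha : 0 < a)
    (ψ m m' : ℝ → ℝ)
    (hψc : ContinuousOn ψ (Set.Ici T₁)) (hψpos : ∀ t ∈ Set.Ici T₁, 0 < ψ t)
    (hψdiv : Filter.Tendsto (fun t => ∫ s in T₁..t, ψ s) Filter.atTop Filter.atTop)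
    (hm : ∀ t ∈ Set.Ici T₁, HasDerivAt m (m' t) t)
    (hm1 : m T₁ = -Real.sqrt (2 * ω + 2 * a))
    (hneg : ∀ t ∈ Set.Ici T₁, m' t < 0)
    (hric : ∀ t ∈ Set.Ici T₁, m t ≤ -Real.sqrt (2 * ω + 2 * a) →
      m' t < ψ t * (-(m t) ^ 2 / 2 + ω)) :
    False := by
  have hsqrt : 0 < √(2 * ω + 2 * a) := Real.sqrt_pos.2 (by positivity)
  have hle : ∀ t ∈ Ici T₁, m t ≤ -√(2 * ω + 2 * a) := fun t ht =>
    hm1 ▸ (convex_Ici T₁).antitoneOn_of_hasDerivAt_nonpos hm (fun t ht => (hneg t ht).le)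
      self_mem_Ici ht ht
  refine false_of_hasDerivAt_le_neg_mul_sq (c := a / (2 * (ω + a))) (by positivity) hψc hψdiv hm
    (fun t ht => (hle t ht).trans_lt (neg_neg_of_pos hsqrt)) fun t ht => ?_
  have hsq : 2 * ω + 2 * a ≤ m t ^ 2 := by
    nlinarith [Real.sq_sqrt (by positivity : (0 : ℝ) ≤ 2 * ω + 2 * a), hle t ht]
  calc m' t ≤ ψ t * (-m t ^ 2 / 2 + ω) := (hric t ht (hle t ht)).le
    _ ≤ ψ t * (-(a / (2 * (ω + a))) * m t ^ 2) := by
      gcongr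
      · exact (hψpos t ht).le
      · exact neg_sq_div_two_add_le_neg_mul_sq hω.le (by positivity) hsq
    _ = -(a / (2 * (ω + a))) * ψ t * m t ^ 2 := by ring
end
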